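/- arXiv:2209.14127 — 3 statements merged into one kernel-verified Lean document; each statement's English description precedes it below -/
import Mathlib

section
/- On EuclideanSpace ℝ (Fin 4), let D(x) = (x 0)² − (x 1)² − (x 2)² − (x 3)² and let f(x) = log √(D(x)), defined on the open set U = {x : D(x) > 0 and x 0 > 0}. Then for every x ∈ U, the gradient of f at x is the vector y with y 0 = x 0 / D(x) and y i = −(x i) / D(x) for i = 1, 2, 3; that is, the gradient of log 𝔲 at x equals the spin factor inverse of x (identifying x with (x 0, (x 1, x 2, x 3)) ∈ ℝ × ℝ³). -/
/-!
Since `log √D = (log D) / 2` where `D > 0`, the gradient of `log 𝔲` is `∇D / (2 D)`. Writing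
`D y = ∑ i, sᵢ (y i)²` with signature `s = (1, −1, −1, −1)` gives `∇D (x) = (2 sᵢ xᵢ)ᵢ`, so the
gradient is `(sᵢ xᵢ / D x)ᵢ`, which is the spin factor inverse of `x`.
-/

noncomputable def lorentzD (x : EuclideanSpace ℝ (Fin 4)) : ℝ :=
  (x 0) ^ 2 - (x 1) ^ 2 - (x 2) ^ 2 - (x 3) ^ 2

open InnerProductSpace

theorem HasDerivAt.comp_hasGradientAt {F : Type*} [NormedAddCommGroup F] [InnerProductSpace ℝ F]
    [CompleteSpace F] {f : F → ℝ} {f' x : F} {g : ℝ → ℝ} {g' : ℝ}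
    (hg : HasDerivAt g g' (f x)) (hf : HasGradientAt f f' x) :
    HasGradientAt (fun y => g (f y)) (g' • f') x := by
  rw [hasGradientAt_iff_hasFDerivAt, map_smul]
  exact hg.comp_hasFDerivAt x hf.hasFDerivAt

theorem Real.hasDerivAt_log_sqrt {t : ℝ} (ht : 0 < t) :
    HasDerivAt (fun s => Real.log (Real.sqrt s)) (2 * t)⁻¹ t := by
  have h : HasDerivAt (fun s => Real.log s / 2) (t⁻¹ / 2) t :=
    (Real.hasDerivAt_log ht.ne').div_const 2
  rw [mul_inv, mul_comm, ← div_eq_mul_inv]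
  refine h.congr_of_eventuallyEq ?_
  filter_upwards [lt_mem_nhds ht] with s hs using Real.log_sqrt hs.le

theorem EuclideanSpace.hasGradientAt_sum_mul_sq {ι : Type*} [Fintype ι] (w : ι → ℝ)
    (x : EuclideanSpace ℝ ι) :
    HasGradientAt (fun y : EuclideanSpace ℝ ι => ∑ i, w i * y i ^ 2)
      (WithLp.toLp 2 fun i => 2 * w i * x i) x := by
  rw [hasGradientAt_iff_hasFDerivAt]
  have hproj (i : ι) : HasFDerivAt (fun y : EuclideanSpace ℝ ι => y i)
      (EuclideanSpace.proj (𝕜 := ℝ) i) x :=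
    (EuclideanSpace.proj (𝕜 := ℝ) i).hasFDerivAt
  refine (HasFDerivAt.fun_sum fun i _ => ((hproj i).pow 2).const_mul (w i)).congr_fderiv ?_
  ext v
  simp only [toDual_apply_apply, PiLp.inner_apply, RCLike.inner_apply, conj_trivial, sum_apply,
    smul_apply, PiLp.proj_apply, smul_eq_mul]
  refine Finset.sum_congr rfl fun i _ => ?_
  ring

def lorentzSign : Fin 4 → ℝ := ![1, -1, -1, -1]

theorem lorentzD_eq_sum (y : EuclideanSpace ℝ (Fin 4)) :
    lorentzD y = ∑ i, lorentzSign i * y i ^ 2 := by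
  simp only [lorentzD, lorentzSign, Fin.sum_univ_four, Matrix.cons_val_zero, Matrix.cons_val_one,
    Matrix.cons_val, one_mul, neg_mul]
  ring

theorem lorentzSign_of_ne_zero {i : Fin 4} (hi : i ≠ 0) : lorentzSign i = -1 := by
  fin_cases i <;> simp_all [lorentzSign]

/-- The spin factor inverse `(α² − ‖a‖²)⁻¹ • (α, −a)` of `x = (α, a) ∈ ℝ × ℝ³`. -/
noncomputable def spinInv (x : EuclideanSpace ℝ (Fin 4)) : EuclideanSpace ℝ (Fin 4) :=
  (lorentzD x)⁻¹ • WithLp.toLp 2 fun i => lorentzSign i * x i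

theorem spinInv_apply (x : EuclideanSpace ℝ (Fin 4)) (i : Fin 4) :
    spinInv x i = lorentzSign i * x i / lorentzD x := by
  simp [spinInv, div_eq_inv_mul]

theorem hasGradientAt_lorentzD (x : EuclideanSpace ℝ (Fin 4)) :
    HasGradientAt lorentzD (WithLp.toLp 2 fun i => 2 * lorentzSign i * x i) x := by
  rw [funext lorentzD_eq_sum]
  exact EuclideanSpace.hasGradientAt_sum_mul_sq lorentzSign x

theorem hasGradientAt_log_sqrt_lorentzD {x : EuclideanSpace ℝ (Fin 4)} (hD : 0 < lorentzD x) :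
    HasGradientAt (fun y => Real.log (Real.sqrt (lorentzD y))) (spinInv x) x := by
  convert (Real.hasDerivAt_log_sqrt hD).comp_hasGradientAt (hasGradientAt_lorentzD x) using 1
  ext i
  rw [spinInv_apply]
  simp only [PiLp.smul_apply, smul_eq_mul]
  field_simp

theorem gradient_log_unitalNorm_general (x : EuclideanSpace ℝ (Fin 4))
    (hD : 0 < lorentzD x) :
    (gradient (fun y => Real.log (Real.sqrt (lorentzD y))) x) 0 = x 0 / lorentzD x ∧
    ∀ i : Fin 4, i ≠ 0 →
      (gradient (fun y => Real.log (Real.sqrt (lorentzD y))) x) i = -(x i) / lorentzD x := by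
  rw [(hasGradientAt_log_sqrt_lorentzD hD).gradient]
  refine ⟨?_, fun i hi => ?_⟩
  · simp [spinInv_apply, lorentzSign]
  · rw [spinInv_apply, lorentzSign_of_ne_zero hi, neg_one_mul]

/-- On `U = {x : D(x) > 0, x 0 > 0}` the gradient of `log √(D(x))` is the spin factor
inverse of `x`: its `0`-th component is `x 0 / D(x)` and its `i`-th component is
`−(x i) / D(x)` for `i ≠ 0`. -/
theorem gradient_log_unitalNorm (x : EuclideanSpace ℝ (Fin 4))
    (hD : 0 < lorentzD x) (hx0 : 0 < x 0) :
    (gradient (fun y => Real.log (Real.sqrt (lorentzD y))) x) 0 = x 0 / lorentzD x ∧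
    ∀ i : Fin 4, i ≠ 0 →
      (gradient (fun y => Real.log (Real.sqrt (lorentzD y))) x) i = -(x i) / lorentzD x :=
  gradient_log_unitalNorm_general x hD
end

section
/- Let n ≥ 2 and let ℓ : EuclideanSpace ℝ (Fin n) → ℝ be nonnegative and differentiable at every s ≠ 0, and suppose that for all s ≠ 0: (i) s = ℓ(s) • (gradient ℓ s), and (ii) ℓ(gradient ℓ s) = 1. Then ℓ(s) = ‖s‖ for all s ≠ 0. -/
/-!
Since `∇(ℓ²) = 2 ℓ ∇ℓ = 2 s = ∇(‖·‖²)`, the function `ℓ² - ‖·‖²` is constant on every open ray,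
so `ℓ (t • s) ^ 2 = t² ‖s‖² + K` for `t > 0`. The gradient `∇ℓ (t • s) = (t / ℓ (t • s)) • s` lies
on the same ray, and `ℓ (∇ℓ (t • s)) = 1` then reads `t² ‖s‖² = (1 - K) (t² ‖s‖² + K)`; this holds
for every `t > 0` only if `K = 0`.
-/

open Set

section

variable {E : Type*} [NormedAddCommGroup E] [InnerProductSpace ℝ E] [CompleteSpace E]
  {ℓ : E → ℝ} {x : E}

theorem pos_of_eq_smul_gradient (hx : x ≠ 0) (hℓ : 0 ≤ ℓ x) (h : x = ℓ x • gradient ℓ x) :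
    0 < ℓ x := by
  refine hℓ.lt_of_ne fun h0 => hx ?_
  rw [h, ← h0, zero_smul]

theorem gradient_eq_inv_smul_of_eq_smul_gradient (hℓ : ℓ x ≠ 0)
    (h : x = ℓ x • gradient ℓ x) : gradient ℓ x = (ℓ x)⁻¹ • x :=
  ((inv_smul_eq_iff₀ hℓ).mpr h).symm

theorem hasFDerivAt_sq_sub_norm_sq_of_eq_smul_gradient (hd : DifferentiableAt ℝ ℓ x)
    (h : x = ℓ x • gradient ℓ x) :
    HasFDerivAt (fun y => ℓ y ^ 2 - ‖y‖ ^ 2) (0 : E →L[ℝ] ℝ) x := by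
  refine ((hd.hasGradientAt.hasFDerivAt.pow 2).sub
    (hasStrictFDerivAt_norm_sq x).hasFDerivAt).congr_fderiv ?_
  ext v
  nth_rewrite 3 [h]
  simp only [Nat.add_one_sub_one, pow_one, nsmul_eq_mul, Nat.cast_ofNat, toDual_gradient, map_smul,
    sub_apply, smul_apply, smul_eq_mul, coe_innerSL_apply, inner_gradient_left, zero_apply]
  ring

end

theorem eq_of_hasFDerivAt_eq_zero_on_ray {E F : Type*} [NormedAddCommGroup E] [NormedSpace ℝ E]
    [NormedAddCommGroup F] [NormedSpace ℝ F] {f : E → F} {s : E}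
    (hf : ∀ t : ℝ, 0 < t → HasFDerivAt f (0 : E →L[ℝ] F) (t • s)) {t : ℝ} (ht : 0 < t) :
    f (t • s) = f s := by
  have hderiv : ∀ t ∈ Ioi (0 : ℝ), HasDerivAt (fun t : ℝ => f (t • s)) 0 t := fun t ht => by
    simpa [Function.comp_def] using (hf t ht).comp_hasDerivAt t ((hasDerivAt_id t).smul_const s)
  simpa using isOpen_Ioi.is_const_of_deriv_eq_zero isPreconnected_Ioi
    (fun t ht => (hderiv t ht).differentiableAt.differentiableWithinAt)
    (fun t ht => (hderiv t ht).deriv) ht (mem_Ioi.mpr one_pos)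

theorem eq_zero_of_sq_eq_of_apply_div_self_eq_one {φ : ℝ → ℝ} {b K : ℝ} (hb : 0 < b)
    (hφ : ∀ t, 0 < t → 0 < φ t) (hsq : ∀ t, 0 < t → φ t ^ 2 = t ^ 2 * b + K)
    (hone : ∀ t, 0 < t → φ (t / φ t) = 1) : K = 0 := by
  have key : ∀ t, 0 < t → t ^ 2 * b = (1 - K) * (t ^ 2 * b + K) := fun t ht => by
    have hφt := (hφ t ht).ne'
    have h := hsq _ (div_pos ht (hφ t ht))
    rw [hone t ht, div_pow] at h
    field_simp at h
    linear_combination -h + (1 - K) * hsq t ht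
  have h1 := key 1 one_pos
  have h2 := key 2 two_pos
  have : 3 * b * K = 0 := by linear_combination h2 - h1
  simpa [hb.ne'] using this

theorem unital_norm_eq_euclidean_norm_general {n : ℕ}
    (ℓ : EuclideanSpace ℝ (Fin n) → ℝ)
    (hpos : ∀ s : EuclideanSpace ℝ (Fin n), s ≠ 0 → 0 ≤ ℓ s)
    (hdiff : ∀ s : EuclideanSpace ℝ (Fin n), s ≠ 0 → DifferentiableAt ℝ ℓ s)
    (heq : ∀ s : EuclideanSpace ℝ (Fin n), s ≠ 0 → s = ℓ s • gradient ℓ s)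
    (hnorm : ∀ s : EuclideanSpace ℝ (Fin n), s ≠ 0 → ℓ (gradient ℓ s) = 1) :
    ∀ s : EuclideanSpace ℝ (Fin n), s ≠ 0 → ℓ s = ‖s‖ := by
  intro s hs
  have hts : ∀ t : ℝ, 0 < t → t • s ≠ 0 := fun t ht => smul_ne_zero ht.ne' hs
  have hℓ : ∀ t : ℝ, 0 < t → 0 < ℓ (t • s) := fun t ht =>
    pos_of_eq_smul_gradient (hts t ht) (hpos _ (hts t ht)) (heq _ (hts t ht))
  have hray : ∀ t : ℝ, 0 < t → ℓ (t • s) ^ 2 = t ^ 2 * ‖s‖ ^ 2 + (ℓ s ^ 2 - ‖s‖ ^ 2) := by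
    intro t ht
    have := eq_of_hasFDerivAt_eq_zero_on_ray (fun t ht =>
      hasFDerivAt_sq_sub_norm_sq_of_eq_smul_gradient (hdiff _ (hts t ht)) (heq _ (hts t ht))) ht
    rw [norm_smul, Real.norm_of_nonneg ht.le] at this
    linear_combination this
  have hunit : ∀ t : ℝ, 0 < t → ℓ ((t / ℓ (t • s)) • s) = 1 := by
    intro t ht
    rw [div_eq_inv_mul, ← smul_smul, ← gradient_eq_inv_smul_of_eq_smul_gradient
      (hℓ t ht).ne' (heq _ (hts t ht))]
    exact hnorm _ (hts t ht)
  have hK := eq_zero_of_sq_eq_of_apply_div_self_eq_one (φ := fun t => ℓ (t • s))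
    (pow_pos (norm_pos_iff.mpr hs) 2) hℓ hray hunit
  exact (sq_eq_sq₀ (hpos s hs) (norm_nonneg s)).mp (sub_eq_zero.mp hK)

/-- If a nonnegative function `ℓ` on `ℝⁿ` (`n ≥ 2`), differentiable away from `0`,
satisfies `s = ℓ(s) • ∇ℓ(s)` and `ℓ(∇ℓ(s)) = 1` for all `s ≠ 0`, then `ℓ` is the
Euclidean norm away from `0`. -/
theorem unital_norm_eq_euclidean_norm {n : ℕ} (hn : 2 ≤ n)
    (ℓ : EuclideanSpace ℝ (Fin n) → ℝ)
    (hpos : ∀ s : EuclideanSpace ℝ (Fin n), s ≠ 0 → 0 ≤ ℓ s)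
    (hdiff : ∀ s : EuclideanSpace ℝ (Fin n), s ≠ 0 → DifferentiableAt ℝ ℓ s)
    (heq : ∀ s : EuclideanSpace ℝ (Fin n), s ≠ 0 → s = ℓ s • gradient ℓ s)
    (hnorm : ∀ s : EuclideanSpace ℝ (Fin n), s ≠ 0 → ℓ (gradient ℓ s) = 1) :
    ∀ s : EuclideanSpace ℝ (Fin n), s ≠ 0 → ℓ s = ‖s‖ :=
  unital_norm_eq_euclidean_norm_general ℓ hpos hdiff heq hnorm
end

section
/- In the exterior algebra Λ(ℝ⁴) over ℝ with standard basis vectors e₀, e₁, e₂, e₃ of Fin 4 → ℝ, let a, b : Fin 4 → ℝ, and define the vectors x = (0, b₀a₁ − a₀b₁, b₀a₂ − a₀b₂, b₀a₃ − a₀b₃) and y = (0, b₁a₀ − a₁b₀, b₁a₂ − a₁b₂, b₁a₃ − a₁b₃). Then ι(e₀) * ι(e₁) * ι(x) * ι(y) = ((b₀a₁ − a₀b₁) * (b₂a₃ − a₂b₃)) • (ι(e₀) * ι(e₁) * ι(e₂) * ι(e₃)). -/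
open ExteriorAlgebra

/-- In the exterior algebra of `ℝ⁴`, wedging the observer-observed plane `e₀ ∧ e₁` with
the observer-partial wedge product `x = b⁰𝐚 − a⁰𝐛` and its time-boost reflection `y`
gives `(b⁰a¹ − a⁰b¹)(b²a³ − a²b³)` times the pseudoscalar. -/
theorem partial_wedge_pseudoscalar (a b : Fin 4 → ℝ) :
    ι ℝ (Pi.single 0 1 : Fin 4 → ℝ) * ι ℝ (Pi.single 1 1 : Fin 4 → ℝ) *
      ι ℝ (![0, b 0 * a 1 - a 0 * b 1, b 0 * a 2 - a 0 * b 2, b 0 * a 3 - a 0 * b 3] :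
        Fin 4 → ℝ) *
      ι ℝ (![0, b 1 * a 0 - a 1 * b 0, b 1 * a 2 - a 1 * b 2, b 1 * a 3 - a 1 * b 3] :
        Fin 4 → ℝ) =
    ((b 0 * a 1 - a 0 * b 1) * (b 2 * a 3 - a 2 * b 3)) •
      (ι ℝ (Pi.single 0 1 : Fin 4 → ℝ) * ι ℝ (Pi.single 1 1 : Fin 4 → ℝ) *
        ι ℝ (Pi.single 2 1 : Fin 4 → ℝ) * ι ℝ (Pi.single 3 1 : Fin 4 → ℝ)) := by
  set e0 := ι ℝ (Pi.single 0 1 : Fin 4 → ℝ) with he0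
  set e1 := ι ℝ (Pi.single 1 1 : Fin 4 → ℝ) with he1
  set e2 := ι ℝ (Pi.single 2 1 : Fin 4 → ℝ) with he2
  set e3 := ι ℝ (Pi.single 3 1 : Fin 4 → ℝ) with he3
  have hvec : ∀ c1 c2 c3 : ℝ, (![0, c1, c2, c3] : Fin 4 → ℝ)
      = c1 • (Pi.single 1 1 : Fin 4 → ℝ) + c2 • (Pi.single 2 1 : Fin 4 → ℝ)
        + c3 • (Pi.single 3 1 : Fin 4 → ℝ) := by
    intro c1 c2 c3; funext i; fin_cases i <;> simp [Pi.single_apply]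
  have hι : ∀ c1 c2 c3 : ℝ, ι ℝ (![0, c1, c2, c3] : Fin 4 → ℝ)
      = c1 • e1 + c2 • e2 + c3 • e3 := by
    intro c1 c2 c3; rw [hvec]; simp [map_add, map_smul]; rfl
  rw [hι, hι]
  have h11 : ∀ z, e1 * (e1 * z) = 0 := fun z => by
    rw [← mul_assoc, ι_sq_zero, zero_mul]
  have h22 : ∀ z, e2 * (e2 * z) = 0 := fun z => by
    rw [← mul_assoc, ι_sq_zero, zero_mul]
  have h33 : ∀ z, e3 * (e3 * z) = 0 := fun z => by
    rw [← mul_assoc, ι_sq_zero, zero_mul]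
  have h22' : e2 * e2 = 0 := ι_sq_zero _
  have h33' : e3 * e3 = 0 := ι_sq_zero _
  have h21 : ∀ z, e2 * (e1 * z) = -(e1 * (e2 * z)) := fun z => by
    rw [← mul_assoc, ← mul_assoc, eq_neg_of_add_eq_zero_left (ι_add_mul_swap _ _), neg_mul]
  have h31 : ∀ z, e3 * (e1 * z) = -(e1 * (e3 * z)) := fun z => by
    rw [← mul_assoc, ← mul_assoc, eq_neg_of_add_eq_zero_left (ι_add_mul_swap _ _), neg_mul]
  have h32 : ∀ z, e3 * (e2 * z) = -(e2 * (e3 * z)) := fun z => by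
    rw [← mul_assoc, ← mul_assoc, eq_neg_of_add_eq_zero_left (ι_add_mul_swap _ _), neg_mul]
  have h21' : e2 * e1 = -(e1 * e2) := eq_neg_of_add_eq_zero_left (ι_add_mul_swap _ _)
  have h31' : e3 * e1 = -(e1 * e3) := eq_neg_of_add_eq_zero_left (ι_add_mul_swap _ _)
  have h32' : e3 * e2 = -(e2 * e3) := eq_neg_of_add_eq_zero_left (ι_add_mul_swap _ _)
  simp only [mul_add, add_mul, mul_smul_comm, smul_mul_assoc, smul_smul, mul_assoc,
    ι_sq_zero, h11, h22, h33, h21, h31, h32, h22', h33', h21', h31', h32',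
    mul_neg, neg_neg, mul_zero, smul_zero, neg_zero, zero_add, add_zero, smul_neg]
  module
end
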